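/- arXiv:1911.11280 — 3 statements merged into one kernel-verified Lean document; each statement's English description precedes it below -/
import Mathlib

section
/- There is an absolute constant c with the following property. Suppose v is a real-valued function on the unit circle T with v, e^v ∈ L¹(T), and for some z in the open unit disk D let γ ≥ 0 be defined by P(e^v, z)/e^{P(v, z)} = 1 + γ. Then P(|v − P(v, z)|, z) ≤ c√γ if γ < 1, and P(|v − P(v, z)|, z) ≤ c log(1 + γ) if γ ≥ 1. -/
open MeasureTheory Metric Filter Topology Set
open scoped Real ENNReal Topology

noncomputable section

/-- Normalized arc-length (Lebesgue) measure on the unit circle `{|z| = 1} ⊆ ℂ`,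
normalized so that the total mass is `1`. -/
def mT : Measure ℂ :=
  (ENNReal.ofReal (2 * Real.pi))⁻¹ •
    (volume.restrict (Set.Ioc (-Real.pi) Real.pi)).map
      (fun t : ℝ => Complex.exp ((t : ℂ) * Complex.I))

/-- Poisson extension of a (finite) measure on the unit circle:
`P(ν, z) = ∫ (1 - |z|²)/|1 - ξ̄ z|² dν(ξ)`. -/
def poissonM (ν : Measure ℂ) (z : ℂ) : ℝ :=
  ∫ ξ, (1 - ‖z‖ ^ 2) / ‖1 - (starRingEnd ℂ) ξ * z‖ ^ 2 ∂ν

/-- Poisson extension of a real-valued function on the unit circle. -/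
def poissonF (v : ℂ → ℝ) (z : ℂ) : ℝ :=
  ∫ ξ, v ξ * ((1 - ‖z‖ ^ 2) / ‖1 - (starRingEnd ℂ) ξ * z‖ ^ 2) ∂mT

/-- Poisson extension of a complex-valued function on the unit circle. -/
def poissonFC (v : ℂ → ℂ) (z : ℂ) : ℂ :=
  ∫ ξ, v ξ * (((1 - ‖z‖ ^ 2) / ‖1 - (starRingEnd ℂ) ξ * z‖ ^ 2 : ℝ) : ℂ) ∂mT

/-- The entropy function `K(ν, z) = log P(ν, z) - P(log w, z)`, where `w = dν/dm`. -/
def entropyM (ν : Measure ℂ) (z : ℂ) : ℝ :=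
  Real.log (poissonM ν z) -
    poissonF (fun ξ => Real.log ((ν.rnDeriv mT ξ).toReal)) z

/-- The entropy function of a weight: `K(v dm, z) = log P(v, z) - P(log v, z)`. -/
def entropyF (v : ℂ → ℝ) (z : ℂ) : ℝ :=
  Real.log (poissonF v z) - poissonF (fun ξ => Real.log (v ξ)) z

/-- A probability measure on the unit circle belongs to the Szegő class if
`log w ∈ L¹(T)` where `w` is the density of its absolutely continuous part. -/
def SzegoClass (μ : Measure ℂ) : Prop :=
  IsProbabilityMeasure μ ∧ μ (Metric.sphere (0 : ℂ) 1)ᶜ = 0 ∧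
    Integrable (fun ξ => Real.log ((μ.rnDeriv mT ξ).toReal)) mT

/-- `f` is the Schur function of the measure `μ`: it is an analytic contraction on the
open unit disk such that `(1 + z f(z))/(1 - z f(z)) = ∫ (1 + ξ̄ z)/(1 - ξ̄ z) dμ(ξ)`. -/
def IsSchurFunction (μ : Measure ℂ) (f : ℂ → ℂ) : Prop :=
  DifferentiableOn ℂ f (ball (0 : ℂ) 1) ∧
  (∀ z ∈ ball (0 : ℂ) 1, ‖f z‖ ≤ 1) ∧
  ∀ z ∈ ball (0 : ℂ) 1,
    (1 + z * f z) / (1 - z * f z)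
      = ∫ ξ, (1 + (starRingEnd ℂ) ξ * z) / (1 - (starRingEnd ℂ) ξ * z) ∂μ

/-- `f : ℕ → ℂ → ℂ` is the family of Schur iterates of `μ`: `f 0` is the Schur function
of `μ` and `z f_{n+1}(z) = (f_n(z) - f_n(0))/(1 - conj (f_n(0)) f_n(z))`. -/
def IsSchurFamily (μ : Measure ℂ) (f : ℕ → ℂ → ℂ) : Prop :=
  IsSchurFunction μ (f 0) ∧
  ∀ n : ℕ, DifferentiableOn ℂ (f (n + 1)) (ball (0 : ℂ) 1) ∧
    (∀ z ∈ ball (0 : ℂ) 1, ‖f (n + 1) z‖ ≤ 1) ∧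
    ∀ z ∈ ball (0 : ℂ) 1,
      z * f (n + 1) z = (f n z - f n 0) / (1 - (starRingEnd ℂ) (f n 0) * f n z)

/-- `φ` is the family of orthonormal polynomials of `μ`: `deg φ_n = n`, the leading
coefficient is (real and) positive, and `(φ_n, φ_k)_{L²(μ)} = δ_{n,k}`. -/
def OrthonormalPolys (μ : Measure ℂ) (φ : ℕ → Polynomial ℂ) : Prop :=
  (∀ n : ℕ, (φ n).natDegree = n) ∧
  (∀ n : ℕ, ∃ r : ℝ, 0 < r ∧ (φ n).leadingCoeff = (r : ℂ)) ∧
  (∀ n k : ℕ, ∫ ξ, (φ n).eval ξ * (starRingEnd ℂ) ((φ k).eval ξ) ∂μ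
      = if n = k then 1 else 0)

/-- The reversed polynomial `φ*(z) = z^n conj(φ(1/z̄))`, i.e. the degree-`n` reflection
with conjugated coefficients. -/
def revStar (n : ℕ) (p : Polynomial ℂ) : Polynomial ℂ :=
  Polynomial.reflect n (p.map (starRingEnd ℂ))

/-- The Szegő function `D_μ(z) = exp ∫ log √w(ξ) (1 + ξ̄ z)/(1 - ξ̄ z) dm(ξ)`,
where `w = dμ/dm`. -/
def szegoD (μ : Measure ℂ) (z : ℂ) : ℂ :=
  Complex.exp (∫ ξ, (Real.log (Real.sqrt ((μ.rnDeriv mT ξ).toReal)) : ℂ) *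
    ((1 + (starRingEnd ℂ) ξ * z) / (1 - (starRingEnd ℂ) ξ * z)) ∂mT)

/-- The Stolz angle `S*_ρ(ξ)`: the convex hull of `ρ·D` and the point `ξ`. -/
def stolz (ρ : ℝ) (ξ : ℂ) : Set ℂ := convexHull ℝ (ball (0 : ℂ) ρ ∪ {ξ})

/-- `g` has nontangential limit `L` at the boundary point `ξ`:  `g(z) → L` as `z → ξ`
inside every Stolz angle `S*_ρ(ξ)`, `ρ ∈ (0,1)`. -/
def NontangentialLimitAt (g : ℂ → ℂ) (ξ L : ℂ) : Prop :=
  ∀ ρ ∈ Set.Ioo (0 : ℝ) 1, Tendsto g (𝓝[stolz ρ ξ \ {ξ}] ξ) (𝓝 L)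

/-!
With `u = v - P(v, z)` and `μ` the harmonic measure `P(z, ξ) dm(ξ)` of `z`, `μ` is a probability
measure with `∫ u dμ = 0` and `∫ e^u dμ = 1 + γ`. Integrating the pointwise bounds
`|t| ≤ ε + (4/ε)(e^t - 1 - t)` for `0 < ε ≤ 1` and `|t| ≤ 2s + 2e^{-s}e^t - t` for `s ≥ 0`
against `μ`, with `ε = √γ` and `s = log (1 + γ)`, gives both estimates with `c = 5`.
-/

section ExpInequalities

open Real

lemma min_sq_abs_le_four_mul_exp_sub_one_sub (t : ℝ) : min (t ^ 2) |t| ≤ 4 * (exp t - 1 - t) := by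
  rcases le_or_gt (-2) t with h | h
  · have h1 : 0 ≤ 1 + t / 2 := by linarith
    have h2 : (1 + t / 2) * (1 + t / 2) ≤ exp (t / 2) * exp (t / 2) :=
      mul_self_le_mul_self h1 (add_one_le_exp _ |>.trans_eq' (by ring))
    rw [← exp_add, add_halves] at h2
    nlinarith [min_le_left (t ^ 2) |t|]
  · nlinarith [min_le_right (t ^ 2) |t|, abs_of_neg (by linarith : t < 0), exp_pos t]

lemma abs_le_add_div_mul_exp_sub_one_sub {ε : ℝ} (hε : 0 < ε) (hε1 : ε ≤ 1) (t : ℝ) :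
    |t| ≤ ε + 4 / ε * (exp t - 1 - t) := by
  have hφ : 0 ≤ exp t - 1 - t := by linarith [add_one_le_exp t]
  rcases le_or_gt |t| ε with h | h
  · have : 0 ≤ 4 / ε * (exp t - 1 - t) := by positivity
    linarith
  · have hmin : ε * |t| ≤ min (t ^ 2) |t| :=
      le_min (by nlinarith [sq_abs t]) (by nlinarith [abs_nonneg t])
    have : |t| ≤ 4 / ε * (exp t - 1 - t) := by
      rw [div_mul_eq_mul_div, le_div_iff₀ hε]
      linarith [min_sq_abs_le_four_mul_exp_sub_one_sub t]
    linarith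

lemma abs_le_two_mul_add_exp_sub {s : ℝ} (hs : 0 ≤ s) (t : ℝ) :
    |t| ≤ 2 * s + 2 * exp (-s) * exp t - t := by
  have h := add_one_le_exp (t - s)
  rw [sub_eq_neg_add, exp_add] at h
  rcases le_or_gt t 0 with ht | ht
  · rw [abs_of_nonpos ht]
    nlinarith [exp_pos (-s), exp_pos t]
  · rw [abs_of_pos ht]
    nlinarith [exp_pos (-s)]

end ExpInequalities

section Korey

open Real

variable {Ω : Type*} [MeasurableSpace Ω] {μ : Measure Ω} [IsProbabilityMeasure μ] {u : Ω → ℝ}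
  {γ : ℝ}

lemma integral_abs_le_of_abs_le_affine_exp (hu : Integrable u μ)
    (heu : Integrable (fun ω => exp (u ω)) μ) {a b c : ℝ}
    (h : ∀ t, |t| ≤ a + b * exp t + c * t) :
    ∫ ω, |u ω| ∂μ ≤ a + b * ∫ ω, exp (u ω) ∂μ + c * ∫ ω, u ω ∂μ := by
  have hab : Integrable (fun ω => a + b * exp (u ω)) μ :=
    (integrable_const a).add (heu.const_mul b)
  calc ∫ ω, |u ω| ∂μ ≤ ∫ ω, a + b * exp (u ω) + c * u ω ∂μ :=
        integral_mono hu.abs (hab.add (hu.const_mul c)) fun ω => h (u ω)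
    _ = a + b * ∫ ω, exp (u ω) ∂μ + c * ∫ ω, u ω ∂μ := by
        rw [integral_add hab (hu.const_mul c),
          integral_add (integrable_const a) (heu.const_mul b), integral_const_mul,
          integral_const_mul, integral_const, probReal_univ, one_smul]

lemma integral_abs_le_five_mul_sqrt (hu : Integrable u μ)
    (heu : Integrable (fun ω => exp (u ω)) μ) (hu0 : ∫ ω, u ω ∂μ = 0)
    (hγ : ∫ ω, exp (u ω) ∂μ = 1 + γ) (hγ0 : 0 ≤ γ) (hγ1 : γ ≤ 1) :
    ∫ ω, |u ω| ∂μ ≤ 5 * √γ := by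
  have key : ∀ ε, 0 < ε → ε ≤ 1 → ∫ ω, |u ω| ∂μ ≤ ε + 4 / ε * γ := by
    intro ε hε hε1
    have := integral_abs_le_of_abs_le_affine_exp hu heu (a := ε - 4 / ε) (b := 4 / ε)
      (c := -(4 / ε)) fun t => by linarith [abs_le_add_div_mul_exp_sub_one_sub hε hε1 t]
    rw [hu0, hγ] at this
    linarith
  rcases hγ0.eq_or_lt with rfl | hγpos
  · rw [sqrt_zero, mul_zero]
    refine le_of_forall_pos_le_add fun ε hε => ?_
    have := key _ (lt_min hε one_pos) (min_le_right ε 1)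
    rw [mul_zero, add_zero] at this
    simpa using this.trans (min_le_left ε 1)
  · have hsqrt : 4 / √γ * γ = 4 * √γ := by
      rw [div_mul_eq_mul_div, mul_div_assoc, div_sqrt]
    have := key (√γ) (sqrt_pos.2 hγpos) (sqrt_le_one.2 hγ1)
    linarith

lemma integral_abs_le_five_mul_log (hu : Integrable u μ)
    (heu : Integrable (fun ω => exp (u ω)) μ) (hu0 : ∫ ω, u ω ∂μ = 0)
    (hγ : ∫ ω, exp (u ω) ∂μ = 1 + γ) (hγ1 : 1 ≤ γ) :
    ∫ ω, |u ω| ∂μ ≤ 5 * log (1 + γ) := by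
  have hlog : 2 / 3 ≤ log (1 + γ) :=
    (log_two_gt_d9.le.trans' (by norm_num)).trans (log_le_log two_pos (by linarith))
  have := integral_abs_le_of_abs_le_affine_exp hu heu (a := 2 * log (1 + γ))
    (b := 2 * exp (-log (1 + γ))) (c := -1)
    fun t => by linarith [abs_le_two_mul_add_exp_sub (hlog.trans' (by norm_num)) t]
  rw [hu0, hγ, exp_neg, exp_log (by linarith), mul_assoc, inv_mul_cancel₀ (by linarith)] at this
  linarith

end Korey

lemma measurable_circleParam : Measurable fun t : ℝ => Complex.exp (t * Complex.I) := by
  fun_prop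

instance isProbabilityMeasure_mT : IsProbabilityMeasure mT := by
  constructor
  rw [mT, Measure.smul_apply, Measure.map_apply measurable_circleParam MeasurableSet.univ]
  simp only [Set.preimage_univ, Measure.restrict_apply MeasurableSet.univ, Set.univ_inter,
    Real.volume_Ioc, smul_eq_mul, sub_neg_eq_add, ← two_mul]
  exact ENNReal.inv_mul_cancel (by simp [Real.pi_pos]) ENNReal.ofReal_ne_top

lemma ae_norm_eq_one_mT : ∀ᵐ ξ ∂mT, ‖ξ‖ = 1 := by
  refine Measure.ae_smul_measure ?_ _
  rw [ae_map_iff measurable_circleParam.aemeasurable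
    (isClosed_eq continuous_norm continuous_const).measurableSet]
  exact ae_of_all _ Complex.norm_exp_ofReal_mul_I

lemma integral_mT_eq_circleAverage {g : ℂ → ℝ} (hg : Measurable g) :
    ∫ ξ, g ξ ∂mT = Real.circleAverage g 0 1 := by
  have hper : Function.Periodic (fun t : ℝ => g (Complex.exp (t * Complex.I))) (2 * π) := by
    intro t
    simp [add_mul, Complex.exp_add]
  have hshift := hper.intervalIntegral_add_eq (-π) 0
  rw [show -π + 2 * π = π by ring, zero_add] at hshift
  rw [mT, integral_smul_measure, integral_map measurable_circleParam.aemeasurable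
      hg.aestronglyMeasurable, ENNReal.toReal_inv, ENNReal.toReal_ofReal (by positivity),
    ← intervalIntegral.integral_of_le (by linarith [Real.pi_pos]), Real.circleAverage_def]
  simp [hshift, circleMap_zero]

lemma poissonKernel_zero_eq_of_norm_eq_one {ξ : ℂ} (hξ : ‖ξ‖ = 1) (z : ℂ) :
    poissonKernel 0 z ξ = (1 - ‖z‖ ^ 2) / ‖1 - (starRingEnd ℂ) ξ * z‖ ^ 2 := by
  have : 1 - (starRingEnd ℂ) ξ * z = (starRingEnd ℂ) ξ * (ξ - z) := by
    rw [mul_sub, ← Complex.normSq_eq_conj_mul_self, Complex.normSq_eq_norm_sq, hξ]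
    simp
  simp [poissonKernel, this, hξ]

lemma measurable_poissonKernel (c w : ℂ) : Measurable (poissonKernel c w) := by
  unfold poissonKernel
  fun_prop

lemma poissonKernel_zero_nonneg {z ξ : ℂ} (hz : ‖z‖ ≤ ‖ξ‖) : 0 ≤ poissonKernel 0 z ξ := by
  unfold poissonKernel
  simp only [sub_zero]
  have := pow_le_pow_left₀ (norm_nonneg z) hz 2
  positivity

lemma poissonKernel_zero_le {z ξ : ℂ} (hz : z ∈ ball (0 : ℂ) 1) (hξ : ‖ξ‖ = 1) :
    poissonKernel 0 z ξ ≤ (1 + ‖z‖) / (1 - ‖z‖) := by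
  simpa [poissonKernel_eq_re_herglotzRieszKernel, herglotzRieszKernel] using
    re_herglotzRieszKernel_le (R := 1) (c := 0) (by simpa using hξ) hz

lemma integral_poissonKernel_mT {z : ℂ} (hz : z ∈ ball (0 : ℂ) 1) :
    ∫ ξ, poissonKernel 0 z ξ ∂mT = 1 := by
  rw [integral_mT_eq_circleAverage (measurable_poissonKernel 0 z)]
  simpa [Pi.mul_def] using
    (InnerProductSpace.harmonicContOnCl_const (c := (1 : ℝ))).circleAverage_poissonKernel_smul hz

lemma ae_poissonKernel_mem_Icc {z : ℂ} (hz : z ∈ ball (0 : ℂ) 1) :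
    ∀ᵐ ξ ∂mT, poissonKernel 0 z ξ ∈ Icc 0 ((1 + ‖z‖) / (1 - ‖z‖)) := by
  filter_upwards [ae_norm_eq_one_mT] with ξ hξ
  exact ⟨poissonKernel_zero_nonneg (by simpa [hξ] using (mem_ball_zero_iff.1 hz).le),
    poissonKernel_zero_le hz hξ⟩

def poissonMeasure (z : ℂ) : Measure ℂ :=
  mT.withDensity fun ξ => ENNReal.ofReal (poissonKernel 0 z ξ)

lemma isProbabilityMeasure_poissonMeasure {z : ℂ} (hz : z ∈ ball (0 : ℂ) 1) :
    IsProbabilityMeasure (poissonMeasure z) := by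
  constructor
  have hint : Integrable (poissonKernel 0 z) mT := by
    refine Integrable.of_bound (measurable_poissonKernel 0 z).aestronglyMeasurable
      ((1 + ‖z‖) / (1 - ‖z‖)) ?_
    filter_upwards [ae_poissonKernel_mem_Icc hz] with ξ hξ
    rw [Real.norm_of_nonneg hξ.1]
    exact hξ.2
  rw [poissonMeasure, withDensity_apply _ MeasurableSet.univ, Measure.restrict_univ,
    ← ofReal_integral_eq_lintegral_ofReal hint
      ((ae_poissonKernel_mem_Icc hz).mono fun _ h => h.1), integral_poissonKernel_mT hz,
    ENNReal.ofReal_one]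

lemma poissonF_eq_integral_poissonMeasure {z : ℂ} (hz : z ∈ ball (0 : ℂ) 1) (g : ℂ → ℝ) :
    poissonF g z = ∫ ξ, g ξ ∂poissonMeasure z := by
  rw [poissonMeasure, integral_withDensity_eq_integral_toReal_smul
    (measurable_poissonKernel 0 z).ennreal_ofReal (ae_of_all _ fun _ => ENNReal.ofReal_lt_top)]
  refine integral_congr_ae ?_
  filter_upwards [ae_norm_eq_one_mT, ae_poissonKernel_mem_Icc hz] with ξ hξ hK
  rw [← poissonKernel_zero_eq_of_norm_eq_one hξ, ENNReal.toReal_ofReal hK.1, smul_eq_mul,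
    mul_comm]

lemma MeasureTheory.Integrable.poissonMeasure {z : ℂ} (hz : z ∈ ball (0 : ℂ) 1) {g : ℂ → ℝ}
    (hg : Integrable g mT) : Integrable g (poissonMeasure z) := by
  refine (hg.smul_measure (ENNReal.ofReal_ne_top (r := (1 + ‖z‖) / (1 - ‖z‖)))).mono_measure ?_
  rw [_root_.poissonMeasure, ← withDensity_const]
  refine withDensity_mono ?_
  filter_upwards [ae_poissonKernel_mem_Icc hz] with ξ hξ
  exact ENNReal.ofReal_le_ofReal hξ.2

/-- Korey-type estimate, Lemma 3.1 of the paper.  There is an absolute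
constant `c` such that: if `v, e^v ∈ L¹(T)` and `P(e^v, z)/e^{P(v,z)} = 1 + γ` with `γ ≥ 0`
for some `z ∈ D`, then `P(|v - P(v,z)|, z) ≤ c √γ` when `γ < 1` and
`P(|v - P(v,z)|, z) ≤ c log(1 + γ)` when `γ ≥ 1`. -/
theorem statement11 :
    ∃ c : ℝ, 0 < c ∧
      ∀ (v : ℂ → ℝ) (z : ℂ) (γ : ℝ),
        Integrable v mT → Integrable (fun ξ => Real.exp (v ξ)) mT →
        z ∈ ball (0 : ℂ) 1 → 0 ≤ γ →
        poissonF (fun ξ => Real.exp (v ξ)) z = (1 + γ) * Real.exp (poissonF v z) →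
        poissonF (fun ξ => |v ξ - poissonF v z|) z
          ≤ c * (if γ < 1 then Real.sqrt γ else Real.log (1 + γ)) := by
  refine ⟨5, by norm_num, fun v z γ hv hev hz hγ0 hγ => ?_⟩
  have := isProbabilityMeasure_poissonMeasure hz
  set p := poissonF v z with hp
  rw [poissonF_eq_integral_poissonMeasure hz] at hp hγ ⊢
  have hu : Integrable (fun ξ => v ξ - p) (poissonMeasure z) :=
    (hv.poissonMeasure hz).sub (integrable_const p)
  have heu : Integrable (fun ξ => Real.exp (v ξ - p)) (poissonMeasure z) := by
    simp_rw [sub_eq_add_neg, Real.exp_add]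
    exact (hev.poissonMeasure hz).mul_const _
  have hu0 : ∫ ξ, v ξ - p ∂poissonMeasure z = 0 := by
    rw [integral_sub (hv.poissonMeasure hz) (integrable_const p), ← hp, integral_const,
      probReal_univ, one_smul, sub_self]
  have heu1 : ∫ ξ, Real.exp (v ξ - p) ∂poissonMeasure z = 1 + γ := by
    simp_rw [sub_eq_add_neg, Real.exp_add]
    rw [integral_mul_const, hγ, mul_assoc, ← Real.exp_add, add_neg_cancel, Real.exp_zero,
      mul_one]
  split_ifs with hγ1
  · exact integral_abs_le_five_mul_sqrt hu heu hu0 heu1 hγ0 hγ1.le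
  · exact integral_abs_le_five_mul_log hu heu hu0 heu1 (not_lt.1 hγ1)

end
end

section
/- For each n ≥ 1, let h_n be a smooth function on (−πn, πn) whose derivative is h_n'(t) = (1/n) Σ_{k=1}^n (1 − |z_{k,n}|²)/|e^{it/n} − z_{k,n}|², where z_{k,n} are points of the open unit disk D. If the sequence {h_n} converges to a smooth function h uniformly on compact subsets of ℝ, then {h_n'} converges to h' uniformly on compact subsets of ℝ. -/
open MeasureTheory Metric Filter Topology Set
open scoped Real ENNReal Topology

noncomputable section

/-- The rescaled sum of Poisson kernels
`(1/n) Σ_{k<n} (1 - |z_k|²)/|e^{it/n} - z_k|²`. -/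
def kernelSum (n : ℕ) (z : ℕ → ℂ) (t : ℝ) : ℝ :=
  (1 / (n : ℝ)) * ∑ k ∈ Finset.range n,
    (1 - ‖z k‖ ^ 2) /
      ‖Complex.exp (((t / (n : ℝ) : ℝ) : ℂ) * Complex.I) - z k‖ ^ 2

lemma chord_sq (a b : ℝ) : ‖Complex.exp (a*Complex.I) - Complex.exp (b*Complex.I)‖^2 = 2 - 2*Real.cos (a-b) := by
  rw [Complex.sq_norm]
  simp [Complex.normSq_apply, Complex.exp_ofReal_mul_I_re, Complex.exp_ofReal_mul_I_im, Real.cos_sub]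
  nlinarith [Real.sin_sq_add_cos_sq a, Real.sin_sq_add_cos_sq b]

lemma chord_le (a b : ℝ) : ‖Complex.exp (a*Complex.I) - Complex.exp (b*Complex.I)‖ ≤ |a - b| := by
  have h := chord_sq a b
  have h2 : 1 - (a-b)^2/2 ≤ Real.cos (a-b) := Real.one_sub_sq_div_two_le_cos
  have hsq : ‖Complex.exp (a*Complex.I) - Complex.exp (b*Complex.I)‖^2 ≤ |a-b|^2 := by
    rw [h, _root_.sq_abs]; nlinarith
  exact (abs_le_of_sq_le_sq' hsq (abs_nonneg _)).2

lemma chord_ge (a b : ℝ) (n : ℕ) (hn : 1 ≤ n) (hab : 1/(n:ℝ) ≤ |a - b|) (hb : |a - b| ≤ Real.pi + 1) :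
    2/(Real.pi*n) ≤ ‖Complex.exp (a*Complex.I) - Complex.exp (b*Complex.I)‖ := by
  have hn1 : (1:ℝ) ≤ n := by exact_mod_cast hn
  have hpi := Real.pi_gt_three
  have h := chord_sq a b
  have habs : (0:ℝ) ≤ ‖Complex.exp (a*Complex.I) - Complex.exp (b*Complex.I)‖ := norm_nonneg _
  have hReal.pin : (3:ℝ) ≤ Real.pi * n := by nlinarith
  have hsq : (2/(Real.pi*n))^2 ≤ ‖Complex.exp (a*Complex.I) - Complex.exp (b*Complex.I)‖^2 := by
    rw [h]
    rcases le_or_gt (|a-b|) Real.pi with hle | hgt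
    · have hc : Real.cos (a-b) ≤ 1 - 2/Real.pi^2 * (a-b)^2 := Real.cos_le_one_sub_mul_cos_sq hle
      have h1 : 1/(n:ℝ)^2 ≤ (a-b)^2 := by
        have h0 := pow_le_pow_left₀ (by positivity : (0:ℝ) ≤ 1/(n:ℝ)) hab 2
        rw [_root_.sq_abs] at h0
        calc 1/(n:ℝ)^2 = (1/(n:ℝ))^2 := by rw [div_pow, one_pow]
          _ ≤ _ := h0
      have h2 : 2/Real.pi^2 * (1/(n:ℝ)^2) ≤ 2/Real.pi^2 * (a-b)^2 :=
        mul_le_mul_of_nonneg_left h1 (by positivity)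
      have heq : (2/(Real.pi*(n:ℝ)))^2 = 2 * (2/Real.pi^2 * (1/(n:ℝ)^2)) := by
        field_simp
      rw [heq]
      nlinarith
    · have hc : Real.cos (a-b) ≤ 0 := by
        rw [← Real.cos_abs]
        exact Real.cos_nonpos_of_pi_div_two_le_of_le (by linarith) (by linarith)
      have h49 : (2/(Real.pi*(n:ℝ)))^2 ≤ 4/9 := by
        rw [div_pow, div_le_div_iff₀ (by positivity) (by norm_num)]
        nlinarith
      linarith
  exact (abs_le_of_sq_le_sq' hsq habs).2


noncomputable def pk (w : ℂ) (θ : ℝ) : ℝ :=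
  (1 - ‖w‖ ^ 2) / ‖Complex.exp ((θ:ℂ) * Complex.I) - w‖ ^ 2

lemma pk_d_ge (w : ℂ) (θ : ℝ) : 1 - ‖w‖ ≤ ‖Complex.exp ((θ:ℂ) * Complex.I) - w‖ := by
  have h1 : ‖Complex.exp ((θ:ℂ) * Complex.I)‖ = 1 := Complex.norm_exp_ofReal_mul_I θ
  have := norm_sub_norm_le (Complex.exp ((θ:ℂ) * Complex.I)) w
  simpa [h1] using this

lemma pk_d_pos (w : ℂ) (hw : ‖w‖ < 1) (θ : ℝ) :
    0 < ‖Complex.exp ((θ:ℂ) * Complex.I) - w‖ :=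
  lt_of_lt_of_le (by linarith) (pk_d_ge w θ)

lemma pk_pos (w : ℂ) (hw : ‖w‖ < 1) (θ : ℝ) : 0 < pk w θ := by
  have h1 : 0 < 1 - ‖w‖ ^ 2 := by
    have := norm_nonneg w; nlinarith
  exact div_pos h1 (pow_pos (pk_d_pos w hw θ) 2)

lemma pk_d_diff (w : ℂ) (θ θ' : ℝ) :
    |‖Complex.exp ((θ':ℂ) * Complex.I) - w‖ -
      ‖Complex.exp ((θ:ℂ) * Complex.I) - w‖| ≤ |θ - θ'| := by
  have h1 : |‖Complex.exp ((θ':ℂ) * Complex.I) - w‖ -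
      ‖Complex.exp ((θ:ℂ) * Complex.I) - w‖| ≤
      ‖(Complex.exp ((θ':ℂ) * Complex.I) - w) - (Complex.exp ((θ:ℂ) * Complex.I) - w)‖ := by
    exact abs_norm_sub_norm_le _ _
  have h2 : (Complex.exp ((θ':ℂ) * Complex.I) - w) - (Complex.exp ((θ:ℂ) * Complex.I) - w)
      = Complex.exp ((θ':ℂ) * Complex.I) - Complex.exp ((θ:ℂ) * Complex.I) := by ring
  rw [h2] at h1
  have h3 := chord_le θ' θ
  calc _ ≤ _ := h1
    _ ≤ |θ' - θ| := h3
    _ = |θ - θ'| := abs_sub_comm _ _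

lemma pk_flat (w : ℂ) (hw : ‖w‖ < 1) (θ θ' : ℝ)
    (hd : 2*|θ - θ'| ≤ ‖Complex.exp ((θ:ℂ) * Complex.I) - w‖) :
    (4/9) * pk w θ ≤ pk w θ' ∧
    |pk w θ' - pk w θ| ≤ 10*|θ-θ'| / ‖Complex.exp ((θ:ℂ) * Complex.I) - w‖ * pk w θ := by
  set dt := ‖Complex.exp ((θ:ℂ) * Complex.I) - w‖ with hdt
  set du := ‖Complex.exp ((θ':ℂ) * Complex.I) - w‖ with hdu
  have hdtpos : 0 < dt := pk_d_pos w hw θ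
  have hdupos : 0 < du := pk_d_pos w hw θ'
  have hdiff : |du - dt| ≤ |θ - θ'| := pk_d_diff w θ θ'
  have he : (0:ℝ) ≤ |θ - θ'| := abs_nonneg _
  have hlow : dt/2 ≤ du := by
    have := abs_le.mp hdiff
    linarith
  have hhigh : du ≤ (3/2)*dt := by
    have := abs_le.mp hdiff
    linarith
  have hN : 0 < 1 - ‖w‖ ^ 2 := by have := norm_nonneg w; nlinarith
  constructor
  · show (4/9) * ((1 - ‖w‖ ^ 2)/dt^2) ≤ (1 - ‖w‖ ^ 2)/du^2
    rw [mul_div_assoc', div_le_div_iff₀ (by positivity) (by positivity)]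
    nlinarith [mul_le_mul hhigh hhigh hdupos.le (by positivity : (0:ℝ) ≤ 3/2*dt), hN.le]
  · show |(1 - ‖w‖ ^ 2)/du^2 - (1 - ‖w‖ ^ 2)/dt^2| ≤
      10*|θ-θ'| / dt * ((1 - ‖w‖ ^ 2)/dt^2)
    have heq : (1 - ‖w‖ ^ 2)/du^2 - (1 - ‖w‖ ^ 2)/dt^2
        = (1 - ‖w‖ ^ 2) * ((dt+du)*(dt-du)) / (dt^2*du^2) := by
      field_simp; ring
    rw [heq, abs_div, abs_mul, _root_.abs_of_nonneg hN.le, _root_.abs_of_nonneg (by positivity : (0:ℝ) ≤ dt^2*du^2)]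
    rw [div_le_iff₀ (by positivity)]
    have h1 : |(dt+du)*(dt-du)| ≤ (5/2*dt) * |θ - θ'| := by
      rw [abs_mul]
      have : |dt - du| ≤ |θ - θ'| := by rw [abs_sub_comm] at hdiff; exact hdiff
      have h2 : |dt + du| ≤ 5/2*dt := by
        rw [_root_.abs_of_nonneg (by positivity)]; linarith
      exact mul_le_mul h2 this (abs_nonneg _) (by positivity)
    calc (1 - ‖w‖ ^ 2) * |(dt+du)*(dt-du)|
        ≤ (1 - ‖w‖ ^ 2) * ((5/2*dt) * |θ - θ'|) := by
          exact mul_le_mul_of_nonneg_left h1 hN.le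
      _ ≤ 10*|θ-θ'| / dt * ((1 - ‖w‖ ^ 2)/dt^2) * (dt^2*du^2) := by
          have hrhs : 10*|θ-θ'| / dt * ((1 - ‖w‖ ^ 2)/dt^2) * (dt^2*du^2)
              = 10*|θ-θ'| * (1 - ‖w‖ ^ 2) * du^2 / dt := by
            field_simp
          rw [hrhs, le_div_iff₀ hdtpos]
          have hdu2 : dt^2/4 ≤ du^2 := by nlinarith
          nlinarith [mul_le_mul_of_nonneg_left hdu2
            (mul_nonneg (by positivity : (0:ℝ) ≤ 10*|θ-θ'|) hN.le)]
lemma pk_near (w : ℂ) (hw : ‖w‖ < 1) (θ : ℝ)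
    (hθ : |θ - Complex.arg w| ≤ 1 - ‖w‖) :
    (1 + ‖w‖)/(4*(1 - ‖w‖)) ≤ pk w θ := by
  have hr0 : 0 ≤ ‖w‖ := norm_nonneg w
  have hr1 : 0 < 1 - ‖w‖ := by linarith
  have hdpos := pk_d_pos w hw θ
  have h3 : (‖w‖ : ℂ) * Complex.exp ((Complex.arg w :ℂ) * Complex.I) = w :=
    Complex.norm_mul_exp_arg_mul_I w
  have h2 : ‖Complex.exp ((Complex.arg w :ℂ) * Complex.I) - w‖ = 1 - ‖w‖ := by
    have heq : Complex.exp ((Complex.arg w :ℂ) * Complex.I) - w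
        = Complex.exp ((Complex.arg w :ℂ) * Complex.I) * (1 - (‖w‖ : ℂ)) := by
      rw [mul_sub, mul_one, mul_comm (Complex.exp ((Complex.arg w :ℂ) * Complex.I)) ((‖w‖ : ℂ)), h3]
    rw [heq, norm_mul, Complex.norm_exp_ofReal_mul_I, one_mul]
    rw [show (1 - (‖w‖ : ℂ)) = ((1 - ‖w‖ : ℝ) : ℂ) by push_cast; ring]
    rw [Complex.norm_real, Real.norm_eq_abs, _root_.abs_of_nonneg hr1.le]
  have hd : ‖Complex.exp ((θ:ℂ) * Complex.I) - w‖ ≤ 2*(1 - ‖w‖) := by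
    have h1 := chord_le θ (Complex.arg w)
    calc ‖Complex.exp ((θ:ℂ) * Complex.I) - w‖
        ≤ ‖Complex.exp ((θ:ℂ) * Complex.I) - Complex.exp ((Complex.arg w :ℂ) * Complex.I)‖
          + ‖Complex.exp ((Complex.arg w :ℂ) * Complex.I) - w‖ := by
          have := norm_sub_le_norm_sub_add_norm_sub (Complex.exp ((θ:ℂ) * Complex.I))
            (Complex.exp ((Complex.arg w :ℂ) * Complex.I)) w
          exact this
      _ ≤ |θ - Complex.arg w| + (1 - ‖w‖) := by rw [h2]; exact add_le_add_left h1 _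
      _ ≤ 2*(1 - ‖w‖) := by linarith
  show (1 + ‖w‖)/(4*(1 - ‖w‖)) ≤
    (1 - ‖w‖ ^ 2) / ‖Complex.exp ((θ:ℂ) * Complex.I) - w‖ ^ 2
  rw [div_le_div_iff₀ (by positivity) (by positivity)]
  nlinarith [mul_le_mul hd hd hdpos.le (by positivity : (0:ℝ) ≤ 2*(1 - ‖w‖))]

lemma pk_cont (w : ℂ) (hw : ‖w‖ < 1) : Continuous (fun θ : ℝ => pk w θ) := by
  apply Continuous.div continuous_const
  · exact (continuous_norm.comp ((Complex.continuous_exp.comp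
      (Complex.continuous_ofReal.mul continuous_const)).sub continuous_const)).pow 2
  · intro θ; exact (pow_pos (pk_d_pos w hw θ) 2).ne'

lemma kernelSum_eq (n : ℕ) (z : ℕ → ℂ) (t : ℝ) :
    kernelSum n z t = (1/(n:ℝ)) * ∑ k ∈ Finset.range n, pk (z k) (t / (n:ℝ)) := rfl

lemma kernelSum_nonneg (n : ℕ) (z : ℕ → ℂ) (hz : ∀ k < n, ‖z k‖ < 1) (t : ℝ) :
    0 ≤ kernelSum n z t := by
  rw [kernelSum_eq]
  apply mul_nonneg (by positivity)
  exact Finset.sum_nonneg fun k hk => (pk_pos (z k) (hz k (Finset.mem_range.mp hk)) _).le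

lemma kernelSum_cont (n : ℕ) (z : ℕ → ℂ) (hz : ∀ k < n, ‖z k‖ < 1) :
    Continuous (fun t => kernelSum n z t) := by
  simp only [kernelSum_eq]
  apply Continuous.mul continuous_const
  apply continuous_finset_sum
  intro k hk
  exact (pk_cont (z k) (hz k (Finset.mem_range.mp hk))).comp (continuous_id.div_const _)

lemma kernelSum_single_le (n : ℕ) (z : ℕ → ℂ) (hz : ∀ k < n, ‖z k‖ < 1)
    (k : ℕ) (hk : k < n) (t : ℝ) :
    (1/(n:ℝ)) * pk (z k) (t/(n:ℝ)) ≤ kernelSum n z t := by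
  rw [kernelSum_eq]
  apply mul_le_mul_of_nonneg_left _ (by positivity)
  exact Finset.single_le_sum
    (fun i hi => (pk_pos (z i) (hz i (Finset.mem_range.mp hi)) _).le) (Finset.mem_range.mpr hk)

lemma kernelSum_flat (n : ℕ) (hn : 1 ≤ n) (z : ℕ → ℂ) (hz : ∀ k < n, ‖z k‖ < 1)
    (l t u : ℝ) (hl : 0 < l)
    (good : ∀ k < n, 2*l/(n:ℝ) ≤ ‖Complex.exp ((↑(t/(n:ℝ)):ℂ) * Complex.I) - z k‖)
    (hu : |t - u| ≤ l) :
    (4/9) * kernelSum n z t ≤ kernelSum n z u ∧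
    |kernelSum n z u - kernelSum n z t| ≤ 5*|t-u|/l * kernelSum n z t := by
  have hν : (0:ℝ) < n := by exact_mod_cast hn
  have key : ∀ k < n,
      ((4/9) * pk (z k) (t/(n:ℝ)) ≤ pk (z k) (u/(n:ℝ)) ∧
       |pk (z k) (u/(n:ℝ)) - pk (z k) (t/(n:ℝ))| ≤ 5*|t-u|/l * pk (z k) (t/(n:ℝ))) := by
    intro k hk
    have hzk := hz k hk
    have hdist : |t/(n:ℝ) - u/(n:ℝ)| = |t-u|/(n:ℝ) := by
      rw [div_sub_div_same, abs_div, _root_.abs_of_pos hν]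
    have hd : 2*|t/(n:ℝ) - u/(n:ℝ)| ≤ ‖Complex.exp ((↑(t/(n:ℝ)):ℂ) * Complex.I) - z k‖ := by
      rw [hdist]
      have h1 : 2*(|t-u|/(n:ℝ)) ≤ 2*l/(n:ℝ) := by
        rw [mul_div_assoc]; gcongr
      exact h1.trans (good k hk)
    obtain ⟨hflat, hlip⟩ := pk_flat (z k) hzk (t/(n:ℝ)) (u/(n:ℝ)) hd
    refine ⟨hflat, hlip.trans ?_⟩
    have hdpos := pk_d_pos (z k) hzk (t/(n:ℝ))
    have hb : 10*|t/(n:ℝ) - u/(n:ℝ)| / ‖Complex.exp ((↑(t/(n:ℝ)):ℂ) * Complex.I) - z k‖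
        ≤ 5*|t-u|/l := by
      rw [hdist]
      calc 10*(|t-u|/(n:ℝ)) / ‖Complex.exp ((↑(t/(n:ℝ)):ℂ) * Complex.I) - z k‖
          ≤ 10*(|t-u|/(n:ℝ)) / (2*l/(n:ℝ)) := by
            apply div_le_div_of_nonneg_left (by positivity) (by positivity) (good k hk)
        _ = 5*|t-u|/l := by field_simp; ring
    exact mul_le_mul_of_nonneg_right hb (pk_pos (z k) hzk _).le |>.trans_eq rfl
  constructor
  · rw [kernelSum_eq, kernelSum_eq]
    rw [← mul_assoc, mul_comm (4/9 : ℝ) (1/(n:ℝ)), mul_assoc, Finset.mul_sum]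
    apply mul_le_mul_of_nonneg_left _ (by positivity)
    exact Finset.sum_le_sum fun k hk => (key k (Finset.mem_range.mp hk)).1
  · rw [kernelSum_eq, kernelSum_eq]
    rw [← mul_sub, ← Finset.sum_sub_distrib, abs_mul, _root_.abs_of_pos (by positivity : (0:ℝ) < 1/(n:ℝ))]
    calc (1/(n:ℝ)) * |∑ k ∈ Finset.range n, (pk (z k) (u/(n:ℝ)) - pk (z k) (t/(n:ℝ)))|
        ≤ (1/(n:ℝ)) * ∑ k ∈ Finset.range n, |pk (z k) (u/(n:ℝ)) - pk (z k) (t/(n:ℝ))| := by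
          apply mul_le_mul_of_nonneg_left (Finset.abs_sum_le_sum_abs _ _) (by positivity)
      _ ≤ (1/(n:ℝ)) * ∑ k ∈ Finset.range n, 5*|t-u|/l * pk (z k) (t/(n:ℝ)) := by
          apply mul_le_mul_of_nonneg_left _ (by positivity)
          exact Finset.sum_le_sum fun k hk => (key k (Finset.mem_range.mp hk)).2
      _ = 5*|t-u|/l * ((1/(n:ℝ)) * ∑ k ∈ Finset.range n, pk (z k) (t/(n:ℝ))) := by
          rw [← Finset.mul_sum]; ring

lemma exp_arg_sub (w : ℂ) (hw : ‖w‖ < 1) :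
    ‖Complex.exp ((Complex.arg w :ℂ) * Complex.I) - w‖ = 1 - ‖w‖ := by
  have hr1 : 0 < 1 - ‖w‖ := by linarith
  have h3 : (‖w‖ : ℂ) * Complex.exp ((Complex.arg w :ℂ) * Complex.I) = w :=
    Complex.norm_mul_exp_arg_mul_I w
  have heq : Complex.exp ((Complex.arg w :ℂ) * Complex.I) - w
      = Complex.exp ((Complex.arg w :ℂ) * Complex.I) * (1 - (‖w‖ : ℂ)) := by
    rw [mul_sub, mul_one, mul_comm (Complex.exp ((Complex.arg w :ℂ) * Complex.I)) ((‖w‖ : ℂ)), h3]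
  rw [heq, norm_mul, Complex.norm_exp_ofReal_mul_I, one_mul]
  rw [show (1 - (‖w‖ : ℂ)) = ((1 - ‖w‖ : ℝ) : ℂ) by push_cast; ring]
  rw [Complex.norm_real, Real.norm_eq_abs, _root_.abs_of_nonneg hr1.le]

set_option maxHeartbeats 2000000 in
/-- Lemma 4.2 of the paper.  Suppose `h_n` is smooth on `(-πn, πn)` with
derivative `h_n'(t) = (1/n) Σ_{k=1}^n (1-|z_{k,n}|²)/|e^{it/n} - z_{k,n}|²`, `z_{k,n} ∈ D`.
If `{h_n}` converges to a smooth function `h` uniformly on compact subsets of `ℝ`, then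
`{h_n'}` converges to `h'` uniformly on compact subsets of `ℝ`. -/
theorem statement14 (h : ℕ → ℝ → ℝ) (z : ℕ → ℕ → ℂ) (hlim : ℝ → ℝ)
    (hz : ∀ n : ℕ, ∀ k < n, z n k ∈ ball (0 : ℂ) 1)
    (hderiv : ∀ n : ℕ, 1 ≤ n → ∀ t ∈ Set.Ioo (-(Real.pi * n)) (Real.pi * n),
      HasDerivAt (h n) (kernelSum n (z n) t) t)
    (hsmooth : ContDiff ℝ (⊤ : ℕ∞) hlim)
    (hconv : ∀ K : Set ℝ, IsCompact K →
      TendstoUniformlyOn (fun n => h n) hlim atTop K) :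
    ∀ K : Set ℝ, IsCompact K →
      TendstoUniformlyOn (fun n t => kernelSum n (z n) t) (deriv hlim) atTop K := by
  have hd_cont : Continuous (deriv hlim) := hsmooth.continuous_deriv (by simp)
  have hlim_cont : Continuous hlim := hsmooth.continuous
  have hlim_diff : Differentiable ℝ hlim := hsmooth.differentiable (by simp)
  intro K hK
  obtain ⟨A0, hA0⟩ := hK.isBounded.subset_closedBall 0
  set A : ℝ := max A0 1 with hAdef
  have hA1 : (1:ℝ) ≤ A := le_max_right _ _
  have hKA : K ⊆ Icc (-A) A := by
    intro x hx
    have h1 := hA0 hx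
    rw [Real.closedBall_eq_Icc] at h1
    have h2 : A0 ≤ A := le_max_left _ _
    obtain ⟨h3, h4⟩ := h1
    rw [zero_sub] at h3; rw [zero_add] at h4
    exact ⟨by linarith, by linarith⟩
  clear_value A
  obtain ⟨M₀, hM₀⟩ := (isCompact_Icc :
    IsCompact (Icc (-(A+3)) (A+3))).exists_bound_of_continuousOn hd_cont.continuousOn
  set M : ℝ := |M₀| + 1 with hMdef
  have hM1 : (1:ℝ) ≤ M := le_add_of_nonneg_left (abs_nonneg _)
  have hM0 : (0:ℝ) < M := by linarith
  have hM : ∀ x ∈ Icc (-(A+3)) (A+3), |deriv hlim x| ≤ M := by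
    intro x hx
    have hb := hM₀ x hx
    rw [Real.norm_eq_abs] at hb
    have := le_abs_self M₀
    linarith
  clear_value M
  set s : ℝ := 1/(8*M) with hsdef
  have hs_pos : 0 < s := by rw [hsdef]; positivity
  have hs18 : s ≤ 1/8 := by
    rw [hsdef]
    rw [div_le_div_iff₀ (by positivity) (by norm_num)]
    linarith
  clear_value s
  set l : ℝ := s/20 with hldef
  have hl_pos : 0 < l := by rw [hldef]; positivity
  have hl1 : l ≤ 1/160 := by rw [hldef]; linarith
  clear_value l
  set C1 : ℝ := (9/(8*l))*(2*l*M + 1/8) with hC1def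
  have hC1_pos : 0 < C1 := by
    rw [hC1def]
    apply mul_pos (by positivity) (by positivity)
  clear_value C1
  set L : ℝ := 5*C1/l with hLdef
  have hL_pos : 0 < L := by rw [hLdef]; positivity
  clear_value L
  have hMs : M*(2*s) = 1/4 := by
    rw [hsdef]; field_simp; ring
  have hconv3 := hconv (Icc (-(A+3)) (A+3)) isCompact_Icc
  rw [Metric.tendstoUniformlyOn_iff] at hconv3
  have ev1 := hconv3 (1/16) (by norm_num)
  rw [Metric.tendstoUniformlyOn_iff]
  intro ε hε
  have huc := (isCompact_Icc :
    IsCompact (Icc (-(A+2)) (A+2))).uniformContinuousOn_of_continuous hd_cont.continuousOn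
  rw [Metric.uniformContinuousOn_iff] at huc
  obtain ⟨dw, hdw_pos, hdw⟩ := huc (ε/4) (by positivity)
  set δ : ℝ := min l (min (ε/(4*(L+1))) dw) with hδdef
  have hδ_pos : 0 < δ := lt_min hl_pos (lt_min (by positivity) hdw_pos)
  have hδl : δ ≤ l := min_le_left _ _
  have hδε : δ ≤ ε/(4*(L+1)) := (min_le_right _ _).trans (min_le_left _ _)
  have hδw : δ ≤ dw := (min_le_right _ _).trans (min_le_right _ _)
  clear_value δ
  have ev2 := hconv3 (δ*ε/8) (by positivity)
  obtain ⟨n₀, hn₀⟩ := exists_nat_ge (2*A+8)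
  filter_upwards [ev1, ev2, eventually_ge_atTop n₀, eventually_ge_atTop 1] with n h1 h2 hnn0 hn1
  have hν0 : (0:ℝ) < n := by exact_mod_cast hn1
  have hν : 2*A+8 ≤ (n:ℝ) := le_trans hn₀ (by exact_mod_cast hnn0)
  have hzn : ∀ k < n, ‖z n k‖ < 1 := by
    intro k hk
    have := hz n k hk
    rwa [mem_ball_zero_iff] at this
  have gcont : Continuous (kernelSum n (z n)) := kernelSum_cont n (z n) hzn
  have gnneg : ∀ u : ℝ, 0 ≤ kernelSum n (z n) u := kernelSum_nonneg n (z n) hzn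
  have hπA : A + 4 ≤ Real.pi * n := by
    nlinarith [Real.pi_gt_three, hν0.le,
      mul_le_mul_of_nonneg_right (le_of_lt Real.pi_gt_three) hν0.le]
  have Hinc : ∀ a b : ℝ, a ≤ b → -(A+3) ≤ a → b ≤ A+3 →
      (∫ u in a..b, kernelSum n (z n) u) = h n b - h n a := by
    intro a b hab ha hb
    apply intervalIntegral.integral_eq_sub_of_hasDerivAt
    · intro x hx
      rw [uIcc_of_le hab] at hx
      apply hderiv n hn1
      exact ⟨by linarith [hx.1], by linarith [hx.2]⟩
    · exact (gcont.intervalIntegrable _ _)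
  have Hmono : ∀ a b : ℝ, a ≤ b → -(A+3) ≤ a → b ≤ A+3 → h n a ≤ h n b := by
    intro a b hab ha hb
    have h0 := Hinc a b hab ha hb
    have h1' : 0 ≤ ∫ u in a..b, kernelSum n (z n) u :=
      intervalIntegral.integral_nonneg hab (fun u _ => gnneg u)
    linarith
  have Hslope : ∀ a b : ℝ, a ≤ b → -(A+3) ≤ a → b ≤ A+3 → hlim b - hlim a ≤ M*(b-a) := by
    intro a b hab ha hb
    rcases eq_or_lt_of_le hab with rfl | hab'
    · simp
    · obtain ⟨c, hc, hceq⟩ := exists_deriv_eq_slope hlim hab' hlim_cont.continuousOn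
        hlim_diff.differentiableOn
      have hcmem : c ∈ Icc (-(A+3)) (A+3) := ⟨by linarith [hc.1], by linarith [hc.2]⟩
      have hMc := hM c hcmem
      have hslope2 : (hlim b - hlim a)/(b-a) ≤ M := by
        rw [← hceq]; exact (abs_le.mp hMc).2
      have hba : 0 < b - a := by linarith
      calc hlim b - hlim a = ((hlim b - hlim a)/(b-a))*(b-a) := by field_simp
        _ ≤ M*(b-a) := mul_le_mul_of_nonneg_right hslope2 hba.le
  have Hup : ∀ a b : ℝ, a ≤ b → -(A+3) ≤ a → b ≤ A+3 → h n b - h n a ≤ M*(b-a) + 1/8 := by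
    intro a b hab ha hb
    have e1 := h1 a ⟨ha, by linarith⟩
    have e2 := h1 b ⟨by linarith, hb⟩
    rw [Real.dist_eq] at e1 e2
    have hs2 := Hslope a b hab ha hb
    have a1 := abs_lt.mp e1
    have a2 := abs_lt.mp e2
    calc h n b - h n a ≤ (hlim b + 1/16) - (hlim a - 1/16) := by linarith [a2.1, a1.2]
      _ ≤ M*(b-a) + 1/8 := by linarith [hs2]
  have Wide : ∀ k < n, ((n:ℝ) * Complex.arg (z n k)) ∈ Icc (-(A+2)) (A+2) →
      s < (n:ℝ)*(1 - ‖z n k‖) := by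
    intro k hk hτ
    by_contra hcon
    push_neg at hcon
    set r := ‖z n k‖ with hrdef
    set τ := (n:ℝ) * Complex.arg (z n k) with hτdef
    have hr1 : r < 1 := hzn k hk
    have hr0 : 0 ≤ r := norm_nonneg _
    set w : ℝ := (n:ℝ)*(1-r) with hwdef
    have hw_pos : 0 < w := by
      apply mul_pos hν0; linarith
    have hws : w ≤ s := hcon
    clear_value r τ w
    have hlow : ∀ u ∈ Icc (τ-w) (τ+w),
        (1/(n:ℝ))*((1+r)/(4*(1-r))) ≤ kernelSum n (z n) u := by
      intro u hu
      have hargeq : u/(n:ℝ) - Complex.arg (z n k) = (u - τ)/(n:ℝ) := by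
        rw [hτdef]; field_simp
      have harg : |u/(n:ℝ) - Complex.arg (z n k)| ≤ 1 - r := by
        rw [hargeq, abs_div, _root_.abs_of_pos hν0, div_le_iff₀ hν0]
        have huτ : |u - τ| ≤ w := by
          rw [abs_le]; exact ⟨by linarith [hu.1], by linarith [hu.2]⟩
        calc |u - τ| ≤ w := huτ
          _ = (1-r)*(n:ℝ) := by rw [hwdef]; ring
      rw [hrdef] at harg
      have hpk := pk_near (z n k) (hzn k hk) (u/(n:ℝ)) harg
      rw [← hrdef] at hpk
      calc (1/(n:ℝ))*((1+r)/(4*(1-r))) ≤ (1/(n:ℝ))*pk (z n k) (u/(n:ℝ)) :=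
            mul_le_mul_of_nonneg_left hpk (by positivity)
        _ ≤ kernelSum n (z n) u := kernelSum_single_le n (z n) hzn k hk u
    have hdom1 : -(A+3) ≤ τ - w := by have := hτ.1; linarith
    have hdom2 : τ + w ≤ A+3 := by have := hτ.2; linarith
    have hint : (2*w)*((1/(n:ℝ))*((1+r)/(4*(1-r)))) ≤ h n (τ+w) - h n (τ-w) := by
      rw [← Hinc (τ-w) (τ+w) (by linarith) hdom1 hdom2]
      have hmono := intervalIntegral.integral_mono_on (μ := volume)
        (by linarith : τ-w ≤ τ+w) intervalIntegrable_const
        (gcont.intervalIntegrable _ _) hlow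
      rw [intervalIntegral.integral_const] at hmono
      have harea : (τ+w - (τ-w)) = 2*w := by ring
      rw [harea, smul_eq_mul] at hmono
      exact hmono
    have hintval : (2*w)*((1/(n:ℝ))*((1+r)/(4*(1-r)))) = (1+r)/2 := by
      rw [hwdef]
      have hn0' : (n:ℝ) ≠ 0 := hν0.ne'
      have hr1' : (1:ℝ) - r ≠ 0 := by linarith
      field_simp
      ring
    have hmid : (1:ℝ)/2 ≤ h n (τ+w) - h n (τ-w) := by
      rw [hintval] at hint; linarith
    have hm1 := Hmono (τ-s) (τ-w) (by linarith) (by have := hτ.1; linarith) (by have := hτ.2; linarith)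
    have hm2 := Hmono (τ+w) (τ+s) (by linarith) (by have := hτ.1; linarith) (by have := hτ.2; linarith)
    have hup2 := Hup (τ-s) (τ+s) (by linarith) (by have := hτ.1; linarith) (by have := hτ.2; linarith)
    have harea2 : M*((τ+s) - (τ-s)) = M*(2*s) := by ring
    rw [harea2, hMs] at hup2
    linarith
  have Good : ∀ t ∈ Icc (-(A+1)) (A+1), ∀ k < n,
      2*l/(n:ℝ) ≤ ‖Complex.exp ((↑(t/(n:ℝ)):ℂ) * Complex.I) - z n k‖ := by
    intro t ht k hk
    set r := ‖z n k‖ with hrdef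
    have hr1 : r < 1 := hzn k hk
    clear_value r
    rcases le_or_gt (2*l/(n:ℝ)) (1 - r) with hcase | hcase
    · have hge := pk_d_ge (z n k) (t/(n:ℝ))
      rw [← hrdef] at hge
      exact hcase.trans hge
    · have hnarrow : (n:ℝ)*(1-r) < 2*l := by
        have hmul := mul_lt_mul_of_pos_left hcase hν0
        calc (n:ℝ)*(1-r) < (n:ℝ)*(2*l/(n:ℝ)) := hmul
          _ = 2*l := by field_simp
      have hτnot : ((n:ℝ) * Complex.arg (z n k)) ∉ Icc (-(A+2)) (A+2) := by
        intro hmem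
        have hwide := Wide k hk hmem
        rw [← hrdef] at hwide
        have h2l : 2*l ≤ s := by rw [hldef]; linarith
        linarith
      have hfar : 1 ≤ |t - (n:ℝ)*Complex.arg (z n k)| := by
        by_contra hc
        push_neg at hc
        apply hτnot
        have habs := abs_lt.mp hc
        exact ⟨by linarith [ht.1, habs.2], by linarith [ht.2, habs.1]⟩
      have h1n : 1/(n:ℝ) ≤ |t/(n:ℝ) - Complex.arg (z n k)| := by
        have heq : t/(n:ℝ) - Complex.arg (z n k) = (t - (n:ℝ)*Complex.arg (z n k))/(n:ℝ) := by
          field_simp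
        rw [heq, abs_div, _root_.abs_of_pos hν0]
        gcongr
      have hlt : |t/(n:ℝ) - Complex.arg (z n k)| ≤ Real.pi + 1 := by
        have h1' : |t/(n:ℝ)| ≤ 1 := by
          rw [abs_div, _root_.abs_of_pos hν0, div_le_one hν0]
          have hta : |t| ≤ A+1 := abs_le.mpr ⟨ht.1, ht.2⟩
          linarith
        have h2' := Complex.abs_arg_le_pi (z n k)
        calc |t/(n:ℝ) - Complex.arg (z n k)| ≤ |t/(n:ℝ)| + |Complex.arg (z n k)| :=
              abs_sub _ _
          _ ≤ Real.pi + 1 := by linarith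
      have hchord := chord_ge (t/(n:ℝ)) (Complex.arg (z n k)) n hn1 h1n hlt
      have h2' : ‖z n k - Complex.exp ((Complex.arg (z n k):ℂ) * Complex.I)‖ = 1 - r := by
        rw [norm_sub_rev, exp_arg_sub (z n k) (hzn k hk), ← hrdef]
      have htri := norm_sub_le_norm_sub_add_norm_sub (Complex.exp ((↑(t/(n:ℝ)):ℂ) * Complex.I)) (z n k)
        (Complex.exp ((Complex.arg (z n k):ℂ) * Complex.I))
      rw [h2'] at htri
      have hπ4 := Real.pi_gt_three
      have hπ5 : Real.pi < 3.15 := Real.pi_lt_d2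
      have hfinal : 2*l/(n:ℝ) ≤ 2/(Real.pi*(n:ℝ)) - (1-r) := by
        have hx : 4*l/(n:ℝ) ≤ 2/(Real.pi*(n:ℝ)) := by
          rw [div_le_div_iff₀ hν0 (mul_pos Real.pi_pos hν0)]
          have hlπ : l*Real.pi ≤ (1/160)*4 :=
            mul_le_mul hl1 Real.pi_le_four Real.pi_pos.le (by norm_num)
          nlinarith [hν0.le, mul_le_mul_of_nonneg_right hlπ hν0.le]
        have hy : 1 - r < 2*l/(n:ℝ) := hcase
        have hz' : 2*l/(n:ℝ) + 2*l/(n:ℝ) = 4*l/(n:ℝ) := by ring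
        linarith
      linarith [hchord, htri, hfinal]
  have Bnd : ∀ t ∈ Icc (-(A+1)) (A+1), kernelSum n (z n) t ≤ C1 := by
    intro t ht
    have hgood := Good t ht
    have hlow2 : ∀ u ∈ Icc (t-l) (t+l),
        (4/9)*kernelSum n (z n) t ≤ kernelSum n (z n) u := by
      intro u hu
      refine (kernelSum_flat n hn1 (z n) hzn l t u hl_pos hgood ?_).1
      rw [abs_le]; exact ⟨by linarith [hu.2], by linarith [hu.1]⟩
    have hint : (2*l)*((4/9)*kernelSum n (z n) t) ≤ h n (t+l) - h n (t-l) := by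
      rw [← Hinc (t-l) (t+l) (by linarith) (by have := ht.1; linarith) (by have := ht.2; linarith)]
      have hmono := intervalIntegral.integral_mono_on (μ := volume)
        (by linarith : t-l ≤ t+l) intervalIntegrable_const
        (gcont.intervalIntegrable _ _) hlow2
      rw [intervalIntegral.integral_const] at hmono
      have harea : (t+l - (t-l)) = 2*l := by ring
      rw [harea, smul_eq_mul] at hmono
      exact hmono
    have hub := Hup (t-l) (t+l) (by linarith) (by have := ht.1; linarith) (by have := ht.2; linarith)
    have harea2 : M*((t+l) - (t-l)) = 2*l*M := by ring
    rw [harea2] at hub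
    have hkey : (8*l/9) * kernelSum n (z n) t ≤ 2*l*M + 1/8 := by nlinarith
    have hgle : kernelSum n (z n) t = (9/(8*l)) * ((8*l/9) * kernelSum n (z n) t) := by
      field_simp
    rw [hgle, hC1def]
    exact mul_le_mul_of_nonneg_left hkey (by positivity)
  intro t ht
  obtain ⟨htl, htr⟩ := hKA ht
  have htmem : t ∈ Icc (-(A+1)) (A+1) := ⟨by linarith, by linarith⟩
  have hdom1 : -(A+3) ≤ t := by linarith
  have hdom2 : t + δ ≤ A+3 := by linarith [hδl, hl1]
  have hIeq := Hinc t (t+δ) (by linarith) hdom1 hdom2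
  have hLip : ∀ u ∈ Set.uIoc t (t+δ), ‖kernelSum n (z n) u - kernelSum n (z n) t‖ ≤ L*δ := by
    intro u hu
    rw [Set.uIoc_of_le (by linarith : t ≤ t+δ)] at hu
    have hut : |t - u| ≤ δ := by
      rw [abs_le]; exact ⟨by linarith [hu.2], by linarith [hu.1.le]⟩
    have hflat := (kernelSum_flat n hn1 (z n) hzn l t u hl_pos (Good t htmem)
      (hut.trans hδl)).2
    rw [Real.norm_eq_abs]
    calc |kernelSum n (z n) u - kernelSum n (z n) t| ≤ 5*|t-u|/l * kernelSum n (z n) t := hflat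
      _ ≤ 5*δ/l * C1 := by
          apply mul_le_mul _ (Bnd t htmem) (gnneg t) (by positivity)
          gcongr
      _ = L*δ := by rw [hLdef]; ring
  have hintdiff : |(h n (t+δ) - h n t) - δ * kernelSum n (z n) t| ≤ L*δ*δ := by
    rw [← hIeq]
    have heq2 : (∫ u in t..(t+δ), kernelSum n (z n) u) - δ * kernelSum n (z n) t
        = ∫ u in t..(t+δ), (kernelSum n (z n) u - kernelSum n (z n) t) := by
      rw [intervalIntegral.integral_sub (gcont.intervalIntegrable _ _) intervalIntegrable_const]
      rw [intervalIntegral.integral_const, smul_eq_mul]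
      ring_nf
    rw [heq2]
    have hnorm := intervalIntegral.norm_integral_le_of_norm_le_const (C := L*δ)
      (f := fun u => kernelSum n (z n) u - kernelSum n (z n) t) (a := t) (b := t+δ) hLip
    rw [Real.norm_eq_abs] at hnorm
    calc |∫ u in t..(t+δ), (kernelSum n (z n) u - kernelSum n (z n) t)| ≤ L*δ*|t+δ-t| := hnorm
      _ = L*δ*δ := by rw [show t+δ-t = δ by ring, _root_.abs_of_pos hδ_pos]
  obtain ⟨c, hc, hceq⟩ := exists_deriv_eq_slope hlim (by linarith : t < t+δ)
    hlim_cont.continuousOn hlim_diff.differentiableOn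
  have hcmem : c ∈ Icc (-(A+2)) (A+2) :=
    ⟨by linarith [hc.1], by linarith [hc.2, hδl, hl1]⟩
  have htmem2 : t ∈ Icc (-(A+2)) (A+2) := ⟨by linarith, by linarith⟩
  have hcd : dist (deriv hlim c) (deriv hlim t) < ε/4 := by
    apply hdw c hcmem t htmem2
    rw [Real.dist_eq, abs_lt]
    exact ⟨by linarith [hc.1, hc.2, hδw], by linarith [hc.1, hc.2, hδw]⟩
  have e1 := h2 (t+δ) ⟨by linarith, hdom2⟩
  have e2 := h2 t ⟨hdom1, by linarith⟩
  rw [Real.dist_eq] at e1 e2 hcd ⊢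
  have hslopeq : (hlim (t+δ) - hlim t)/δ = deriv hlim c := by
    rw [hceq]; rw [show t+δ-t = δ by ring]
  have t3 : |(h n (t+δ) - h n t)/δ - kernelSum n (z n) t| ≤ L*δ := by
    rw [show (h n (t+δ) - h n t)/δ - kernelSum n (z n) t
        = ((h n (t+δ) - h n t) - δ * kernelSum n (z n) t)/δ by field_simp]
    rw [abs_div, _root_.abs_of_pos hδ_pos, div_le_iff₀ hδ_pos]
    calc |(h n (t+δ) - h n t) - δ * kernelSum n (z n) t| ≤ L*δ*δ := hintdiff
      _ = L*δ*δ := rfl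
  have t2 : |deriv hlim c - (h n (t+δ) - h n t)/δ| ≤ ε/4 := by
    rw [← hslopeq]
    rw [show (hlim (t+δ) - hlim t)/δ - (h n (t+δ) - h n t)/δ
        = ((hlim (t+δ) - h n (t+δ)) - (hlim t - h n t))/δ by ring]
    rw [abs_div, _root_.abs_of_pos hδ_pos, div_le_iff₀ hδ_pos]
    have htri2 : |(hlim (t+δ) - h n (t+δ)) - (hlim t - h n t)|
        ≤ |hlim (t+δ) - h n (t+δ)| + |hlim t - h n t| := abs_sub _ _
    have hεδ : 0 < δ*ε := by positivity
    nlinarith [e1, e2, htri2]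
  have tL : L*δ < ε/4 := by
    have hstep : L*δ ≤ L*(ε/(4*(L+1))) := mul_le_mul_of_nonneg_left hδε hL_pos.le
    have hstep2 : L*(ε/(4*(L+1))) < ε/4 := by
      have heq : L*(ε/(4*(L+1))) = (L*ε)/(4*(L+1)) := by ring
      rw [heq, div_lt_div_iff₀ (by positivity) (by norm_num)]
      nlinarith [hε, hL_pos]
    linarith
  calc |deriv hlim t - kernelSum n (z n) t|
      ≤ |deriv hlim t - deriv hlim c| + |deriv hlim c - kernelSum n (z n) t| :=
        abs_sub_le _ _ _
    _ ≤ |deriv hlim t - deriv hlim c| + (|deriv hlim c - (h n (t+δ) - h n t)/δ|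
        + |(h n (t+δ) - h n t)/δ - kernelSum n (z n) t|) := by
        have := abs_sub_le (deriv hlim c) ((h n (t+δ) - h n t)/δ) (kernelSum n (z n) t)
        linarith
    _ < ε := by
        rw [abs_sub_comm] at hcd
        linarith


end
end

section
/- For each n ≥ 1, let h_n be a smooth function on (−πn, πn) whose derivative is h_n'(t) = (1/n) Σ_{k=1}^n (1 − |z_{k,n}|²)/|e^{it/n} − z_{k,n}|², with z_{k,n} in the open unit disk D. Assume {h_n} converges almost everywhere on ℝ to some nondecreasing function h, and that lim_{n→∞} ( n · min_{1≤j≤n} |1 − z_{j,n}| ) = +∞. Then h is affine, h(t) = c_1 t + c_2, and {h_n} converges to h uniformly on compact subsets of ℝ. -/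
open MeasureTheory Metric Filter Topology Set
open scoped Real ENNReal Topology

noncomputable section

/-!
Since `|e^{it/n} - 1| ≤ |t|/n`, for `|t| ≤ R` the point `e^{it/n}` lies within `R/(n m_n)` times
`|1 - z_{k,n}|` of `1`, where `m_n = min_k |1 - z_{k,n}|`. Hence every Poisson kernel in `h_n'` is
within a factor `1 + O(R/(n m_n))` of its value at `t = 0`, and `h_n` is affine with slope
`c_n = h_n'(0)` up to a relative error `O(R/(n m_n)) → 0`, uniformly on `[-R, R]`. Comparing two
points of a.e. convergence shows that `c_n` converges, so `h_n` converges uniformly on compact sets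
to an affine function; this agrees with the monotone `h` on a dense set, hence everywhere.
-/

theorem abs_inv_sq_sub_inv_sq_le {a d ε : ℝ} (hd : 0 < d) (hε : ε ≤ 1 / 2)
    (had : |a - d| ≤ ε * d) : |(a ^ 2)⁻¹ - (d ^ 2)⁻¹| ≤ 8 * ε * (d ^ 2)⁻¹ := by
  have hε0 : 0 ≤ ε := nonneg_of_mul_nonneg_left ((abs_nonneg _).trans had) hd
  have ha : d ≤ 2 * a := by linarith [(abs_le.1 had).1, mul_le_mul_of_nonneg_right hε hd.le]
  have ha0 : 0 < a := by linarith
  have key : |d ^ 2 - a ^ 2| ≤ 8 * ε * a ^ 2 := by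
    rw [show d ^ 2 - a ^ 2 = (a - d) * -(d + a) by ring, abs_mul, abs_neg,
      abs_of_pos (by linarith : 0 < d + a)]
    calc |a - d| * (d + a) ≤ ε * d * (d + a) := by gcongr
      _ ≤ 8 * ε * a ^ 2 := by nlinarith [mul_le_mul_of_nonneg_left ha hε0]
  rw [inv_sub_inv (by positivity) (by positivity), abs_div,
    abs_of_pos (by positivity : 0 < a ^ 2 * d ^ 2)]
  calc |d ^ 2 - a ^ 2| / (a ^ 2 * d ^ 2) ≤ 8 * ε * a ^ 2 / (a ^ 2 * d ^ 2) := by gcongr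
    _ = 8 * ε * (d ^ 2)⁻¹ := by field_simp

theorem abs_poissonKernel_sub_le {w ξ : ℂ} {ε : ℝ} (hw : ‖w‖ ≤ 1) (hw1 : 0 < ‖1 - w‖)
    (hε : ε ≤ 1 / 2) (hξ : ‖ξ - 1‖ ≤ ε * ‖1 - w‖) :
    |(1 - ‖w‖ ^ 2) / ‖ξ - w‖ ^ 2 - (1 - ‖w‖ ^ 2) / ‖1 - w‖ ^ 2|
      ≤ 8 * ε * ((1 - ‖w‖ ^ 2) / ‖1 - w‖ ^ 2) := by
  have hnum : 0 ≤ 1 - ‖w‖ ^ 2 := by nlinarith [norm_nonneg w]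
  have hdist : |‖ξ - w‖ - ‖1 - w‖| ≤ ε * ‖1 - w‖ :=
    (abs_norm_sub_norm_le _ _).trans (by rwa [sub_sub_sub_cancel_right])
  simp only [div_eq_mul_inv, ← mul_sub, abs_mul, abs_of_nonneg hnum]
  calc (1 - ‖w‖ ^ 2) * |(‖ξ - w‖ ^ 2)⁻¹ - (‖1 - w‖ ^ 2)⁻¹|
      ≤ (1 - ‖w‖ ^ 2) * (8 * ε * (‖1 - w‖ ^ 2)⁻¹) := by
        gcongr; exact abs_inv_sq_sub_inv_sq_le hw1 hε hdist
    _ = 8 * ε * ((1 - ‖w‖ ^ 2) * (‖1 - w‖ ^ 2)⁻¹) := by ring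

theorem kernelSum_zero (n : ℕ) (w : ℕ → ℂ) :
    kernelSum n w 0 = 1 / (n : ℝ) * ∑ k ∈ Finset.range n, (1 - ‖w k‖ ^ 2) / ‖1 - w k‖ ^ 2 := by
  simp [kernelSum]

theorem abs_kernelSum_sub_kernelSum_zero_le {n : ℕ} {w : ℕ → ℂ} {m ε t : ℝ} (hn : 0 < n)
    (hw : ∀ k < n, ‖w k‖ ≤ 1) (hm : 0 < m) (hmw : ∀ k < n, m ≤ ‖1 - w k‖) (hε : ε ≤ 1 / 2)
    (ht : |t| ≤ ε * (n * m)) :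
    |kernelSum n w t - kernelSum n w 0| ≤ 8 * ε * kernelSum n w 0 := by
  have hn' : (0 : ℝ) < n := by exact_mod_cast hn
  have hε0 : 0 ≤ ε := nonneg_of_mul_nonneg_left ((abs_nonneg t).trans ht) (by positivity)
  have hξ : ‖Complex.exp (((t / n : ℝ) : ℂ) * Complex.I) - 1‖ ≤ ε * m := by
    rw [mul_comm]
    refine Real.norm_exp_I_mul_ofReal_sub_one_le.trans ?_
    rw [Real.norm_eq_abs, abs_div, abs_of_pos hn', div_le_iff₀ hn']
    linarith
  rw [kernelSum_zero, kernelSum, ← mul_sub, ← Finset.sum_sub_distrib, abs_mul,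
    abs_of_nonneg (by positivity), mul_left_comm, Finset.mul_sum]
  refine mul_le_mul_of_nonneg_left ((Finset.abs_sum_le_sum_abs _ _).trans
    (Finset.sum_le_sum fun k hk => ?_)) (by positivity)
  have hk := Finset.mem_range.1 hk
  exact abs_poissonKernel_sub_le (hw k hk) (hm.trans_le (hmw k hk)) hε
    (hξ.trans (mul_le_mul_of_nonneg_left (hmw k hk) hε0))

theorem Convex.abs_image_sub_sub_mul_le {f f' : ℝ → ℝ} {s : Set ℝ} {c C x y : ℝ}
    (hs : Convex ℝ s) (hf : ∀ x ∈ s, HasDerivAt f (f' x) x) (hf' : ∀ x ∈ s, |f' x - c| ≤ C)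
    (hx : x ∈ s) (hy : y ∈ s) : |f y - f x - c * (y - x)| ≤ C * |y - x| := by
  have := hs.norm_image_sub_le_of_norm_hasDerivWithin_le (f := fun x => f x - c * x)
    (fun x hx => (((hf x hx).sub ((hasDerivAt_id x).const_mul c)).hasDerivWithinAt).congr_deriv
      (by simp)) hf' hx hy
  simpa only [Real.norm_eq_abs, mul_sub, sub_sub_sub_comm] using this

theorem Monotone.eq_of_eqOn_dense {f g : ℝ → ℝ} (hf : Monotone f) (hg : Continuous g)
    {s : Set ℝ} (hs : Dense s) (hfg : EqOn f g s) : f = g := by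
  funext t
  obtain ⟨u, -, hu, hut⟩ := hs.exists_seq_strictAnti_tendsto t
  obtain ⟨v, -, hv, hvt⟩ := hs.exists_seq_strictMono_tendsto t
  refine le_antisymm
    (_root_.ge_of_tendsto ((hg.tendsto t).comp hut) (Eventually.of_forall fun n => ?_))
    (_root_.le_of_tendsto ((hg.tendsto t).comp hvt) (Eventually.of_forall fun n => ?_))
  · exact (hf (hu n).1.le).trans_eq (hfg (hu n).2)
  · exact (hfg (hv n).2).symm.trans_le (hf (hv n).1.le)

def AsymptoticallyAffine (F : ℕ → ℝ → ℝ) (c : ℕ → ℝ) : Prop :=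
  ∃ ε : ℕ → ℝ, Tendsto ε atTop (𝓝 0) ∧ (∀ n, 0 ≤ ε n) ∧
    ∀ R, 0 ≤ R → ∀ᶠ n in atTop, ∀ s ∈ Icc (-R) R, ∀ t ∈ Icc (-R) R,
      |F n t - F n s - c n * (t - s)| ≤ R * ε n * |c n| * |t - s|

namespace AsymptoticallyAffine

variable {F : ℕ → ℝ → ℝ} {c : ℕ → ℝ}

theorem tendsto_slope (hF : AsymptoticallyAffine F c) {a b A B : ℝ} (hab : a < b)
    (ha : Tendsto (F · a) atTop (𝓝 A)) (hb : Tendsto (F · b) atTop (𝓝 B)) :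
    Tendsto c atTop (𝓝 ((B - A) / (b - a))) := by
  obtain ⟨ε, hε, hε0, hF⟩ := hF
  set R := max |a| |b|
  have hR : 0 ≤ R := (abs_nonneg a).trans (le_max_left _ _)
  have haR : a ∈ Icc (-R) R := abs_le.1 (le_max_left _ _)
  have hbR : b ∈ Icc (-R) R := abs_le.1 (le_max_right _ _)
  have hd : 0 < b - a := sub_pos.2 hab
  have hRε : Tendsto (fun n => R * ε n) atTop (𝓝 0) := by simpa using hε.const_mul R
  have hΔ : Tendsto (fun n => F n b - F n a) atTop (𝓝 (B - A)) := hb.sub ha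
  have herr : ∀ᶠ n in atTop,
      ‖c n * (b - a) - (F n b - F n a)‖ ≤ R * ε n * (2 * |F n b - F n a|) := by
    filter_upwards [hF R hR, hRε.eventually (eventually_le_nhds one_half_pos)] with n hn hεn
    have hnab : |c n * (b - a) - (F n b - F n a)| ≤ R * ε n * (|c n| * (b - a)) := by
      simpa only [abs_sub_comm, abs_of_pos hd, mul_assoc] using hn a haR b hbR
    have hc : |c n| * (b - a) ≤ 2 * |F n b - F n a| := by
      have htri := abs_sub_abs_le_abs_sub (c n * (b - a)) (F n b - F n a)
      rw [abs_mul, abs_of_pos hd] at htri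
      nlinarith [mul_nonneg (sub_nonneg.2 hεn) (mul_nonneg (abs_nonneg (c n)) hd.le)]
    rw [Real.norm_eq_abs]
    exact hnab.trans (mul_le_mul_of_nonneg_left hc (mul_nonneg hR (hε0 n)))
  have hcd : Tendsto (fun n => c n * (b - a)) atTop (𝓝 (B - A)) := by
    have := squeeze_zero_norm' herr (by simpa using hRε.mul (hΔ.abs.const_mul 2))
    simpa using this.add hΔ
  exact (hcd.div_const _).congr fun n => mul_div_cancel_right₀ _ hd.ne'

theorem tendstoUniformlyOn (hF : AsymptoticallyAffine F c) {a A c₁ : ℝ}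
    (ha : Tendsto (F · a) atTop (𝓝 A)) (hc : Tendsto c atTop (𝓝 c₁)) {K : Set ℝ}
    (hK : IsCompact K) : TendstoUniformlyOn F (fun t => A + c₁ * (t - a)) atTop K := by
  obtain ⟨ε, hε, hε0, hF⟩ := hF
  obtain ⟨R, hR⟩ := (hK.insert a).isBounded.subset_closedBall 0
  rw [Real.closedBall_zero_eq_Icc] at hR
  have haR : a ∈ Icc (-R) R := hR (mem_insert a K)
  have hR0 : 0 ≤ R := by linarith [haR.1, haR.2]
  have hE : Tendsto (fun n => |F n a - A| + (|c n - c₁| + R * ε n * |c n|) * (2 * R))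
      atTop (𝓝 0) := by
    have := (ha.sub_const A).abs.add
      (((hc.sub_const c₁).abs.add ((hε.const_mul R).mul hc.abs)).mul_const (2 * R))
    simpa using this
  rw [Metric.tendstoUniformlyOn_iff]
  intro δ hδ
  filter_upwards [hF R hR0, hE.eventually (gt_mem_nhds hδ)] with n hn hEn t ht
  have htR := hR (mem_insert_of_mem a ht)
  have hta : |t - a| ≤ 2 * R :=
    abs_le.2 ⟨by linarith [htR.1, haR.2], by linarith [htR.2, haR.1]⟩
  calc dist (A + c₁ * (t - a)) (F n t)
      = |(F n a - A) + (c n - c₁) * (t - a) + (F n t - F n a - c n * (t - a))| := by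
        rw [dist_comm, Real.dist_eq]; ring_nf
    _ ≤ |F n a - A| + |c n - c₁| * |t - a| + R * ε n * |c n| * |t - a| := by
        grw [abs_add_three, abs_mul, hn a haR t htR]
    _ ≤ |F n a - A| + (|c n - c₁| + R * ε n * |c n|) * (2 * R) := by
        have := mul_nonneg (mul_nonneg hR0 (hε0 n)) (abs_nonneg (c n))
        rw [add_mul, ← add_assoc]; gcongr
    _ < δ := hEn

end AsymptoticallyAffine

theorem asymptoticallyAffine_of_hasDerivAt_kernelSum {h : ℕ → ℝ → ℝ} {z : ℕ → ℕ → ℂ}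
    (hz : ∀ n, ∀ k < n, ‖z n k‖ ≤ 1)
    (hderiv : ∀ n : ℕ, 1 ≤ n → ∀ t ∈ Set.Ioo (-(Real.pi * n)) (Real.pi * n),
      HasDerivAt (h n) (kernelSum n (z n) t) t)
    (hmin : Tendsto (fun n : ℕ =>
        (n : ℝ) * sInf ((fun k => ‖1 - z n k‖) '' {k : ℕ | k < n})) atTop atTop) :
    AsymptoticallyAffine h fun n => kernelSum n (z n) 0 := by
  set m := fun n : ℕ => sInf ((fun k => ‖1 - z n k‖) '' {k : ℕ | k < n})
  have hm0 : ∀ n, 0 ≤ m n := fun n => Real.sInf_nonneg (by rintro _ ⟨k, -, rfl⟩; positivity)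
  have hmz : ∀ n, ∀ k < n, m n ≤ ‖1 - z n k‖ := fun n k hk =>
    csInf_le ⟨0, by rintro _ ⟨j, -, rfl⟩; positivity⟩ ⟨k, hk, rfl⟩
  refine ⟨fun n => 8 / (n * m n), by simpa using hmin.const_div_atTop 8,
    fun n => by have := hm0 n; positivity, fun R hR => ?_⟩
  have hπ : Tendsto (fun n : ℕ => π * n) atTop atTop :=
    tendsto_natCast_atTop_atTop.const_mul_atTop Real.pi_pos
  filter_upwards [eventually_gt_atTop 0, hmin.eventually_gt_atTop (2 * R),
    hπ.eventually_gt_atTop R] with n hn hnm hRπ s hs t ht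
  have hnm0 : 0 < n * m n := by linarith
  have hm : 0 < m n := pos_of_mul_pos_right hnm0 n.cast_nonneg
  have hkernel : ∀ x ∈ Icc (-R) R, |kernelSum n (z n) x - kernelSum n (z n) 0|
      ≤ 8 * (R / (n * m n)) * kernelSum n (z n) 0 := fun x hx =>
    abs_kernelSum_sub_kernelSum_zero_le hn (hz n) hm (hmz n) (by rw [div_le_iff₀ hnm0]; linarith)
      (by rw [div_mul_cancel₀ _ hnm0.ne']; exact abs_le.2 hx)
  refine ((convex_Icc (-R) R).abs_image_sub_sub_mul_le
    (fun x hx => hderiv n hn x ⟨by linarith [hx.1], by linarith [hx.2]⟩) hkernel hs ht).trans ?_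
  rw [show 8 * (R / (n * m n)) = R * (8 / (n * m n)) by ring]
  gcongr
  exact le_abs_self _

/-- Lemma 4.4 of the paper.  With `h_n` as above, if `{h_n}` converges
almost everywhere on `ℝ` to a nondecreasing function `h`, and
`n · min_{1≤j≤n} |1 - z_{j,n}| → ∞`, then `h` is affine, `h(t) = c₁ t + c₂`, and `{h_n}`
converges to `h` uniformly on compact subsets of `ℝ`. -/
theorem statement16 (h : ℕ → ℝ → ℝ) (z : ℕ → ℕ → ℂ) (hlim : ℝ → ℝ)
    (hz : ∀ n : ℕ, ∀ k < n, z n k ∈ ball (0 : ℂ) 1)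
    (hderiv : ∀ n : ℕ, 1 ≤ n → ∀ t ∈ Set.Ioo (-(Real.pi * n)) (Real.pi * n),
      HasDerivAt (h n) (kernelSum n (z n) t) t)
    (hmono : Monotone hlim)
    (hae : ∀ᵐ t ∂(volume : Measure ℝ), Tendsto (fun n => h n t) atTop (𝓝 (hlim t)))
    (hmin : Tendsto (fun n : ℕ =>
        (n : ℝ) * sInf ((fun k => ‖1 - z n k‖) '' {k : ℕ | k < n}))
      atTop atTop) :
    (∃ c₁ c₂ : ℝ, ∀ t : ℝ, hlim t = c₁ * t + c₂) ∧
      ∀ K : Set ℝ, IsCompact K → TendstoUniformlyOn (fun n => h n) hlim atTop K := by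
  have hS : Dense {t | Tendsto (fun n => h n t) atTop (𝓝 (hlim t))} := Measure.dense_of_ae hae
  obtain ⟨a, ha⟩ := hS.nonempty
  obtain ⟨b, hb, hab⟩ := hS.exists_gt a
  have haff := asymptoticallyAffine_of_hasDerivAt_kernelSum
    (fun n k hk => (mem_ball_zero_iff.1 (hz n k hk)).le) hderiv hmin
  set c₁ := (hlim b - hlim a) / (b - a)
  have hunif : ∀ K, IsCompact K →
      TendstoUniformlyOn h (fun t => hlim a + c₁ * (t - a)) atTop K :=
    fun K hK => haff.tendstoUniformlyOn ha (haff.tendsto_slope hab ha hb) hK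
  have hlim_eq : hlim = fun t => hlim a + c₁ * (t - a) :=
    hmono.eq_of_eqOn_dense (by fun_prop) hS fun t ht =>
      tendsto_nhds_unique ht ((hunif {t} isCompact_singleton).tendsto_at rfl)
  refine ⟨⟨c₁, hlim a - c₁ * a, fun t => by rw [congrFun hlim_eq t]; ring⟩, fun K hK => ?_⟩
  rw [hlim_eq]
  exact hunif K hK

end
end
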